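/- arXiv:1503.01996 — 15 statements merged into one kernel-verified Lean document; each statement's English description precedes it below -/
import Mathlib

section
/- Let c be a positive integer and let A be a real c×c matrix whose off-diagonal entries are nonpositive (A i j ≤ 0 for i ≠ j), whose row sums are all zero (∀ i, ∑ j, A i j = 0) and whose column sums are all zero (∀ j, ∑ i, A i j = 0). Then for every vector γ : Fin c → ℝ one has γ ⬝ᵥ (A *ᵥ (fun i => Real.exp (γ i))) ≥ 0. -/
/-!
Since the row and column sums of `A` vanish, `∑ i j, A i j (u i + v j) = 0` for all `u, v`.
Subtracting this with `u = exp ∘ γ` and `v j = (γ j - 1) exp (γ j)` rewrites `γ ⬝ᵥ A *ᵥ exp ∘ γ` as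
`-∑ i j, A i j D(γ i, γ j)`, where `D(x, y) = exp x - exp y - (x - y) exp y ≥ 0` is the Bregman
divergence of the convex function `exp`. As `D` vanishes on the diagonal and `A` is nonpositive off
it, every term is nonnegative.
-/

open Matrix

namespace Matrix

variable {ι R : Type*} [Fintype ι]

theorem sum_sum_mul_add_eq_zero [NonUnitalNonAssocSemiring R] {A : Matrix ι ι R}
    (hrow : ∀ i, ∑ j, A i j = 0) (hcol : ∀ j, ∑ i, A i j = 0) (u v : ι → R) :
    ∑ i, ∑ j, A i j * (u i + v j) = 0 := by
  simp only [mul_add, Finset.sum_add_distrib]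
  rw [Finset.sum_comm (f := fun i j => A i j * v j)]
  simp only [← Finset.sum_mul, hrow, hcol, zero_mul, Finset.sum_const_zero, add_zero]

theorem dotProduct_mulVec_eq_sum_sum_sub [CommRing R] {A : Matrix ι ι R}
    (hrow : ∀ i, ∑ j, A i j = 0) (hcol : ∀ j, ∑ i, A i j = 0) (x y u v : ι → R) :
    x ⬝ᵥ (A *ᵥ y) = ∑ i, ∑ j, A i j * (x i * y j - (u i + v j)) := by
  simp only [mul_sub, Finset.sum_sub_distrib, sum_sum_mul_add_eq_zero hrow hcol, sub_zero,
    dotProduct, mulVec, Finset.mul_sum]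
  exact Finset.sum_congr rfl fun i _ => Finset.sum_congr rfl fun j _ => by ring

theorem sum_sum_mul_nonneg_of_offDiag_nonpos [Ring R] [PartialOrder R] [IsOrderedRing R]
    {A : Matrix ι ι R} {w : ι → ι → R} (hA : ∀ i j, i ≠ j → A i j ≤ 0)
    (hw : ∀ i j, i ≠ j → w i j ≤ 0) (hdiag : ∀ i, w i i = 0) :
    0 ≤ ∑ i, ∑ j, A i j * w i j := by
  refine Finset.sum_nonneg fun i _ => Finset.sum_nonneg fun j _ => ?_
  obtain rfl | hij := eq_or_ne i j
  · simp [hdiag]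
  · exact mul_nonneg_of_nonpos_of_nonpos (hA i j hij) (hw i j hij)

end Matrix

theorem Real.sub_add_one_mul_exp_le_exp (x y : ℝ) : (x - y + 1) * exp y ≤ exp x := by
  calc (x - y + 1) * exp y ≤ exp (x - y) * exp y := by
        gcongr
        exact add_one_le_exp _
    _ = exp x := by rw [← exp_add, sub_add_cancel]

theorem balanced_laplacian_dissipation_general
    (c : ℕ) (A : Matrix (Fin c) (Fin c) ℝ)
    (hoff : ∀ i j, i ≠ j → A i j ≤ 0)
    (hrow : ∀ i, ∑ j, A i j = 0)
    (hcol : ∀ j, ∑ i, A i j = 0) :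
    ∀ γ : Fin c → ℝ, γ ⬝ᵥ (A *ᵥ (fun i => Real.exp (γ i))) ≥ 0 := by
  intro γ
  rw [ge_iff_le, dotProduct_mulVec_eq_sum_sum_sub hrow hcol _ _ (fun i => Real.exp (γ i))
    (fun j => (γ j - 1) * Real.exp (γ j))]
  refine sum_sum_mul_nonneg_of_offDiag_nonpos hoff (fun i j _ => ?_) (fun i => by ring)
  linarith [Real.sub_add_one_mul_exp_le_exp (γ i) (γ j)]

theorem balanced_laplacian_dissipation
    (c : ℕ) (hc : 0 < c) (A : Matrix (Fin c) (Fin c) ℝ)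
    (hoff : ∀ i j, i ≠ j → A i j ≤ 0)
    (hrow : ∀ i, ∑ j, A i j = 0)
    (hcol : ∀ j, ∑ i, A i j = 0) :
    ∀ γ : Fin c → ℝ, γ ⬝ᵥ (A *ᵥ (fun i => Real.exp (γ i))) ≥ 0 :=
  balanced_laplacian_dissipation_general c A hoff hrow hcol
end

section
/- Let c be a positive integer and let A be a real c×c matrix with nonpositive off-diagonal entries, zero row sums and zero column sums. Then for every γ : Fin c → ℝ, the equality γ ⬝ᵥ (A *ᵥ (fun i => Real.exp (γ i))) = 0 holds if and only if γ i = γ j for every pair of distinct indices i, j with A i j ≠ 0. -/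
/-!
Since `A` has zero row and column sums, the dissipation `γ ⬝ᵥ A *ᵥ exp ∘ γ` equals
`∑ i, ∑ j, -A i j * D(γ i, γ j)`, where `D(x, y) = eˣ - eʸ - (x - y) eʸ` is the Bregman divergence
of `exp`. Off the diagonal `-A i j ≥ 0`, and by strict convexity `D(x, y) ≥ 0` with equality only
at `x = y`, so the sum of these nonnegative terms vanishes iff `γ i = γ j` wherever `A i j ≠ 0`.
-/

open Matrix Real

noncomputable def expBregman (x y : ℝ) : ℝ :=
  exp x - exp y - (x - y) * exp y

lemma expBregman_eq_exp_mul (x y : ℝ) :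
    expBregman x y = exp y * (exp (x - y) - (x - y + 1)) := by
  rw [expBregman, exp_sub, mul_sub, mul_div_cancel₀ _ (exp_ne_zero y)]
  ring

lemma expBregman_nonneg (x y : ℝ) : 0 ≤ expBregman x y := by
  rw [expBregman_eq_exp_mul]
  exact mul_nonneg (exp_nonneg y) (sub_nonneg.mpr (add_one_le_exp _))

lemma expBregman_eq_zero_iff {x y : ℝ} : expBregman x y = 0 ↔ x = y := by
  refine ⟨fun h => ?_, fun h => by simp [expBregman, h]⟩
  by_contra hxy
  have hlt := add_one_lt_exp (sub_ne_zero.mpr hxy)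
  rw [expBregman_eq_exp_mul] at h
  exact (mul_pos (exp_pos y) (sub_pos.mpr hlt)).ne' h

section Laplacian

variable {ι : Type*} {A : Matrix ι ι ℝ}

lemma dotProduct_mulVec_exp_eq_sum_expBregman [Fintype ι] (hrow : ∀ i, ∑ j, A i j = 0)
    (hcol : ∀ j, ∑ i, A i j = 0) (γ : ι → ℝ) :
    γ ⬝ᵥ (A *ᵥ fun i => exp (γ i)) = ∑ i, ∑ j, -A i j * expBregman (γ i) (γ j) := by
  have hrow' : ∑ i, ∑ j, A i j * exp (γ i) = 0 :=
    Finset.sum_eq_zero fun i _ => by rw [← Finset.sum_mul, hrow, zero_mul]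
  have hcol' (g : ι → ℝ) : ∑ i, ∑ j, A i j * g j = 0 := by
    rw [Finset.sum_comm]
    exact Finset.sum_eq_zero fun j _ => by rw [← Finset.sum_mul, hcol, zero_mul]
  have hterm (i j : ι) : -A i j * expBregman (γ i) (γ j) = γ i * (A i j * exp (γ j))
      - A i j * exp (γ i) + A i j * exp (γ j) - A i j * (γ j * exp (γ j)) := by
    rw [expBregman]; ring
  simp only [hterm, Finset.sum_sub_distrib, Finset.sum_add_distrib, hrow', hcol', dotProduct,
    mulVec, Finset.mul_sum]
  ring

lemma neg_mul_expBregman_nonneg (hoff : ∀ i j, i ≠ j → A i j ≤ 0) (γ : ι → ℝ) (i j : ι) :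
    0 ≤ -A i j * expBregman (γ i) (γ j) := by
  obtain rfl | hij := eq_or_ne i j
  · simp [expBregman_eq_zero_iff.mpr rfl]
  · exact mul_nonneg (neg_nonneg.mpr (hoff i j hij)) (expBregman_nonneg _ _)

end Laplacian

theorem balanced_laplacian_dissipation_eq_zero_iff_general
    (c : ℕ) (A : Matrix (Fin c) (Fin c) ℝ)
    (hoff : ∀ i j, i ≠ j → A i j ≤ 0)
    (hrow : ∀ i, ∑ j, A i j = 0)
    (hcol : ∀ j, ∑ i, A i j = 0) :
    ∀ γ : Fin c → ℝ,
      γ ⬝ᵥ (A *ᵥ (fun i => Real.exp (γ i))) = 0 ↔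
        ∀ i j, i ≠ j → A i j ≠ 0 → γ i = γ j := by
  intro γ
  have hnonneg := neg_mul_expBregman_nonneg hoff γ
  rw [dotProduct_mulVec_exp_eq_sum_expBregman hrow hcol,
    Finset.sum_eq_zero_iff_of_nonneg fun i _ => Finset.sum_nonneg fun j _ => hnonneg i j]
  simp only [Finset.mem_univ, forall_const,
    Finset.sum_eq_zero_iff_of_nonneg fun j _ => hnonneg _ j, mul_eq_zero, neg_eq_zero,
    expBregman_eq_zero_iff]
  refine forall₂_congr fun i j => ⟨fun h _ hA => h.resolve_left hA, fun h => ?_⟩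
  obtain rfl | hij := eq_or_ne i j
  · exact Or.inr rfl
  · exact or_iff_not_imp_left.mpr (h hij)

theorem balanced_laplacian_dissipation_eq_zero_iff
    (c : ℕ) (hc : 0 < c) (A : Matrix (Fin c) (Fin c) ℝ)
    (hoff : ∀ i j, i ≠ j → A i j ≤ 0)
    (hrow : ∀ i, ∑ j, A i j = 0)
    (hcol : ∀ j, ∑ i, A i j = 0) :
    ∀ γ : Fin c → ℝ,
      γ ⬝ᵥ (A *ᵥ (fun i => Real.exp (γ i))) = 0 ↔
        ∀ i j, i ≠ j → A i j ≠ 0 → γ i = γ j :=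
  balanced_laplacian_dissipation_eq_zero_iff_general c A hoff hrow hcol
end

section
/- Let c be a positive integer and let A be a real c×c matrix with nonpositive off-diagonal entries, zero row sums and zero column sums. If γ : Fin c → ℝ satisfies γ ⬝ᵥ (A *ᵥ (fun i => Real.exp (γ i))) = 0, then A *ᵥ (fun i => Real.exp (γ i)) = 0. -/
/-!
Write `x = exp ∘ γ` and let `D a b = exp a - exp b - exp b * (a - b) ≥ 0` be the Bregman divergence
of `exp`, which vanishes only for `a = b`. Since every row and column of `A` sums to zero, terms of
`∑ᵢⱼ Aᵢⱼ γᵢ xⱼ` depending on `i` alone or on `j` alone drop out, leaving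
`γ ⬝ᵥ A x = -∑ᵢⱼ Aᵢⱼ D(γᵢ, γⱼ)`. Every summand `Aᵢⱼ D(γᵢ, γⱼ)` is `≤ 0`, so all vanish, and
`Aᵢⱼ ≠ 0` forces `γᵢ = γⱼ`. Hence `(A x)ᵢ = ∑ⱼ Aᵢⱼ (xⱼ - xᵢ) = 0`.
-/

open Matrix

namespace Real

noncomputable def expBregman (a b : ℝ) : ℝ :=
  exp a - exp b - exp b * (a - b)

lemma exp_eq_exp_mul_exp_sub (a b : ℝ) : exp a = exp b * exp (a - b) := by
  rw [← exp_add, add_sub_cancel]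

lemma expBregman_nonneg (a b : ℝ) : 0 ≤ expBregman a b := by
  have h := mul_le_mul_of_nonneg_left (add_one_le_exp (a - b)) (exp_pos b).le
  rw [← exp_eq_exp_mul_exp_sub] at h
  unfold expBregman
  linarith

lemma expBregman_pos {a b : ℝ} (hab : a ≠ b) : 0 < expBregman a b := by
  have h := mul_lt_mul_of_pos_left (add_one_lt_exp (sub_ne_zero.mpr hab)) (exp_pos b)
  rw [← exp_eq_exp_mul_exp_sub] at h
  unfold expBregman
  linarith

lemma expBregman_self (a : ℝ) : expBregman a a = 0 := by
  simp [expBregman]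

end Real

namespace Matrix

variable {ι : Type*} [Fintype ι] {A : Matrix ι ι ℝ}

lemma sum_sum_mul_left_eq_zero (hrow : ∀ i, ∑ j, A i j = 0) (u : ι → ℝ) :
    ∑ i, ∑ j, A i j * u i = 0 := by
  simp [← Finset.sum_mul, hrow]

lemma sum_sum_mul_right_eq_zero (hcol : ∀ j, ∑ i, A i j = 0) (v : ι → ℝ) :
    ∑ i, ∑ j, A i j * v j = 0 := by
  rw [Finset.sum_comm]
  simp [← Finset.sum_mul, hcol]

lemma mulVec_apply_eq_sum_mul_sub (hrow : ∀ i, ∑ j, A i j = 0) (x : ι → ℝ) (i : ι) :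
    (A *ᵥ x) i = ∑ j, A i j * (x j - x i) := by
  simp only [mulVec, dotProduct, mul_sub, Finset.sum_sub_distrib, ← Finset.sum_mul, hrow,
    zero_mul, sub_zero]

lemma dotProduct_mulVec_exp_eq_neg_sum_expBregman (hrow : ∀ i, ∑ j, A i j = 0)
    (hcol : ∀ j, ∑ i, A i j = 0) (γ : ι → ℝ) :
    γ ⬝ᵥ (A *ᵥ fun i => Real.exp (γ i)) =
      -∑ i, ∑ j, A i j * Real.expBregman (γ i) (γ j) := by
  have hsplit : ∀ i j, A i j * (γ i * Real.exp (γ j)) =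
      -(A i j * Real.expBregman (γ i) (γ j)) + A i j * Real.exp (γ i) +
        A i j * (Real.exp (γ j) * γ j - Real.exp (γ j)) := by
    intro i j
    unfold Real.expBregman
    ring
  simp only [dotProduct, mulVec, Finset.mul_sum, mul_left_comm (γ _), hsplit,
    Finset.sum_add_distrib, Finset.sum_neg_distrib, sum_sum_mul_left_eq_zero hrow,
    sum_sum_mul_right_eq_zero hcol, add_zero]

end Matrix

theorem balanced_laplacian_zero_dissipation_equilibrium_general
    (c : ℕ) (A : Matrix (Fin c) (Fin c) ℝ)
    (hoff : ∀ i j, i ≠ j → A i j ≤ 0)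
    (hrow : ∀ i, ∑ j, A i j = 0)
    (hcol : ∀ j, ∑ i, A i j = 0)
    (γ : Fin c → ℝ)
    (hγ : γ ⬝ᵥ (A *ᵥ (fun i => Real.exp (γ i))) = 0) :
    A *ᵥ (fun i => Real.exp (γ i)) = 0 := by
  have hterm : ∀ p : Fin c × Fin c, A p.1 p.2 * Real.expBregman (γ p.1) (γ p.2) ≤ 0 := by
    rintro ⟨i, j⟩
    obtain rfl | hij := eq_or_ne i j
    · simp [Real.expBregman_self]
    · exact mul_nonpos_of_nonpos_of_nonneg (hoff i j hij) (Real.expBregman_nonneg _ _)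
  have hzero : ∀ i j, A i j * Real.expBregman (γ i) (γ j) = 0 := by
    rw [dotProduct_mulVec_exp_eq_neg_sum_expBregman hrow hcol, neg_eq_zero,
      ← Fintype.sum_prod_type', Fintype.sum_eq_zero_iff_of_nonpos hterm] at hγ
    exact fun i j => congrFun hγ (i, j)
  funext i
  rw [mulVec_apply_eq_sum_mul_sub hrow, Pi.zero_apply]
  refine Finset.sum_eq_zero fun j _ => ?_
  obtain hγij | hγij := eq_or_ne (γ i) (γ j)
  · simp [hγij]
  · simp [(mul_eq_zero.mp (hzero i j)).resolve_right (Real.expBregman_pos hγij).ne']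

theorem balanced_laplacian_zero_dissipation_equilibrium
    (c : ℕ) (hc : 0 < c) (A : Matrix (Fin c) (Fin c) ℝ)
    (hoff : ∀ i j, i ≠ j → A i j ≤ 0)
    (hrow : ∀ i, ∑ j, A i j = 0)
    (hcol : ∀ j, ∑ i, A i j = 0)
    (γ : Fin c → ℝ)
    (hγ : γ ⬝ᵥ (A *ᵥ (fun i => Real.exp (γ i))) = 0) :
    A *ᵥ (fun i => Real.exp (γ i)) = 0 :=
  balanced_laplacian_zero_dissipation_equilibrium_general c A hoff hrow hcol γ hγ
end

section
/- Let c, m be positive integers, Z a real m×c matrix, and L a real c×c matrix whose kernel (as the kernel of the linear map v ↦ L *ᵥ v) is one-dimensional. Suppose x₁*, x₂* : Fin m → ℝ are both positive and both satisfy L *ᵥ exp∘(Zᵀ *ᵥ log∘xᵢ*) = 0 (i = 1, 2). Then there exists β > 0 such that L * Matrix.diagonal (exp∘(Zᵀ *ᵥ log∘x₁*)) = β • (L * Matrix.diagonal (exp∘(Zᵀ *ᵥ log∘x₂*))). (The balanced Laplacian matrices associated with different complex-balanced equilibria of a connected network differ by a positive multiplicative constant.) -/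
open Matrix

theorem Submodule.exists_pos_smul_eq_of_finrank_eq_one {ι : Type*} {S : Submodule ℝ (ι → ℝ)}
    (hS : Module.finrank ℝ S = 1) {u v : ι → ℝ} (hu : u ∈ S) (hv : v ∈ S)
    (hu_pos : ∀ i, 0 < u i) (hv_pos : ∀ i, 0 < v i) : ∃ β : ℝ, 0 < β ∧ u = β • v := by
  -- A nonzero vector of `S` provides an index `i`, so that `v ≠ 0`.
  have : Nontrivial S := Module.nontrivial_of_finrank_eq_succ hS
  obtain ⟨w, hw⟩ := exists_ne (0 : S)
  obtain ⟨i, -⟩ := Function.ne_iff.mp (Subtype.coe_ne_coe.mpr hw)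
  have hv_ne : (⟨v, hv⟩ : S) ≠ 0 := fun h => (hv_pos i).ne' (congrFun (congrArg Subtype.val h) i)
  obtain ⟨β, hβ⟩ := (finrank_eq_one_iff_of_nonzero' _ hv_ne).mp hS ⟨u, hu⟩
  have huv : u = β • v := (congrArg Subtype.val hβ).symm
  have hβ_pos : 0 < β := by
    have hi : u i = β * v i := congrFun huv i
    exact pos_of_mul_pos_left (hi ▸ hu_pos i) (hv_pos i).le
  exact ⟨β, hβ_pos, huv⟩

theorem balanced_laplacians_differ_by_positive_constant_general
    (c m : ℕ)
    (Z : Matrix (Fin m) (Fin c) ℝ)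
    (L : Matrix (Fin c) (Fin c) ℝ)
    (hker : Module.finrank ℝ (LinearMap.ker L.mulVecLin) = 1)
    (x₁ x₂ : Fin m → ℝ)
    (hbal₁ : L *ᵥ (fun i => Real.exp ((Zᵀ *ᵥ (fun k => Real.log (x₁ k))) i)) = 0)
    (hbal₂ : L *ᵥ (fun i => Real.exp ((Zᵀ *ᵥ (fun k => Real.log (x₂ k))) i)) = 0) :
    ∃ β : ℝ, 0 < β ∧
      L * Matrix.diagonal (fun i => Real.exp ((Zᵀ *ᵥ (fun k => Real.log (x₁ k))) i)) =
        β • (L * Matrix.diagonal (fun i => Real.exp ((Zᵀ *ᵥ (fun k => Real.log (x₂ k))) i))) := by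
  obtain ⟨β, hβ_pos, hβ⟩ := Submodule.exists_pos_smul_eq_of_finrank_eq_one hker
    (LinearMap.mem_ker.mpr hbal₁) (LinearMap.mem_ker.mpr hbal₂)
    (fun _ => Real.exp_pos _) (fun _ => Real.exp_pos _)
  exact ⟨β, hβ_pos, by rw [hβ, diagonal_smul, Matrix.mul_smul]⟩

theorem balanced_laplacians_differ_by_positive_constant
    (c m : ℕ) (hc : 0 < c) (hm : 0 < m)
    (Z : Matrix (Fin m) (Fin c) ℝ)
    (L : Matrix (Fin c) (Fin c) ℝ)
    (hker : Module.finrank ℝ (LinearMap.ker L.mulVecLin) = 1)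
    (x₁ x₂ : Fin m → ℝ) (hx₁ : ∀ k, 0 < x₁ k) (hx₂ : ∀ k, 0 < x₂ k)
    (hbal₁ : L *ᵥ (fun i => Real.exp ((Zᵀ *ᵥ (fun k => Real.log (x₁ k))) i)) = 0)
    (hbal₂ : L *ᵥ (fun i => Real.exp ((Zᵀ *ᵥ (fun k => Real.log (x₂ k))) i)) = 0) :
    ∃ β : ℝ, 0 < β ∧
      L * Matrix.diagonal (fun i => Real.exp ((Zᵀ *ᵥ (fun k => Real.log (x₁ k))) i)) =
        β • (L * Matrix.diagonal (fun i => Real.exp ((Zᵀ *ᵥ (fun k => Real.log (x₂ k))) i))) :=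
  balanced_laplacians_differ_by_positive_constant_general c m Z L hker x₁ x₂ hbal₁ hbal₂
end

section
/- Let c be a positive integer and let L be a real c×c matrix all of whose column sums are zero (∀ j, ∑ i, L i j = 0). Then every row of the adjugate matrix of L is constant: for all indices i, j, j', Matrix.adjugate L i j = Matrix.adjugate L i j'. (Equivalently, the (i,j)-th cofactor C_{ij} of L does not depend on i.) -/
/-!
Since the rows of `M` sum to zero, adding to row `j'` of `M.updateRow j v` all rows except row
`j` turns it into `-M j` without changing the determinant; swapping rows `j` and `j'` then gives
`M.updateRow j' v`, and the two sign changes cancel. Applied to `v = Pi.single i 1`, this says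
that the cofactors `adjugate M i j` do not depend on `j`.
-/

open Matrix Finset

namespace Matrix

variable {n R : Type*} [Fintype n] [DecidableEq n] [CommRing R]

theorem det_updateRow_updateRow_swap (M : Matrix n n R) {i j : n} (hij : i ≠ j) (u v : n → R) :
    ((M.updateRow i u).updateRow j v).det = -((M.updateRow i v).updateRow j u).det := by
  have hswap : (M.updateRow i u).updateRow j v =
      ((M.updateRow i v).updateRow j u).submatrix (Equiv.swap i j) id := by
    ext a b
    rcases eq_or_ne a i with rfl | hai
    · simp [hij]
    rcases eq_or_ne a j with rfl | haj
    · simp [hij]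
    · simp [Equiv.swap_apply_of_ne_of_ne hai haj, hai, haj]
  rw [hswap, det_permute, Equiv.Perm.sign_swap hij]
  simp

theorem det_updateRow_eq_of_sum_rows_eq_zero {M : Matrix n n R} (hM : ∀ j, ∑ i, M i j = 0)
    (v : n → R) (j j' : n) : (M.updateRow j v).det = (M.updateRow j' v).det := by
  rcases eq_or_ne j j' with rfl | hne
  · rfl
  set B := M.updateRow j v
  have hrows : ∑ k, (if k = j then 0 else 1 : R) • B k = -M j := by
    ext b
    have hterm : ∀ k ∈ univ.erase j, ((if k = j then 0 else 1 : R) • B k) b = M k b := by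
      intro k hk
      simp [B, ne_of_mem_erase hk]
    rw [Finset.sum_apply, ← add_sum_erase _ _ (mem_univ j), sum_congr rfl hterm,
      if_pos rfl, zero_smul, Pi.zero_apply, zero_add, Pi.neg_apply]
    exact eq_neg_of_add_eq_zero_right ((add_sum_erase _ _ (mem_univ j)).trans (hM b))
  calc B.det = (B.updateRow j' (-M j)).det := by
        rw [← hrows, det_updateRow_sum, if_neg hne.symm, one_smul]
    _ = -(B.updateRow j' (M j)).det := by
        rw [← neg_one_smul R (M j), det_updateRow_smul, neg_one_mul]
    _ = (M.updateRow j' v).det := by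
        rw [det_updateRow_updateRow_swap _ hne, updateRow_eq_self, neg_neg]

theorem adjugate_apply_eq_of_sum_rows_eq_zero {M : Matrix n n R} (hM : ∀ j, ∑ i, M i j = 0)
    (i j j' : n) : M.adjugate i j = M.adjugate i j' := by
  rw [adjugate_apply, adjugate_apply, det_updateRow_eq_of_sum_rows_eq_zero hM]

end Matrix

theorem adjugate_rows_constant_of_zero_column_sums_general
    (c : ℕ)
    (L : Matrix (Fin c) (Fin c) ℝ)
    (hcol : ∀ j, ∑ i, L i j = 0) :
    ∀ i j j', Matrix.adjugate L i j = Matrix.adjugate L i j' :=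
  adjugate_apply_eq_of_sum_rows_eq_zero hcol

theorem adjugate_rows_constant_of_zero_column_sums
    (c : ℕ) (hc : 0 < c)
    (L : Matrix (Fin c) (Fin c) ℝ)
    (hcol : ∀ j, ∑ i, L i j = 0) :
    ∀ i j j', Matrix.adjugate L i j = Matrix.adjugate L i j' :=
  adjugate_rows_constant_of_zero_column_sums_general c L hcol
end

section
/- Let c, m be positive integers, L a real c×c matrix, and Z a real m×c matrix. Suppose ρ : Fin c → ℝ is a strictly positive vector such that the kernel of the linear map v ↦ L *ᵥ v equals the span of ρ. Then there exists μ : Fin m → ℝ with L *ᵥ (fun i => Real.exp ((Zᵀ *ᵥ μ) i)) = 0 if and only if there exist w : Fin m → ℝ and b : ℝ such that for all i, Real.log (ρ i) = (Zᵀ *ᵥ w) i + b. (Complex balancing holds if and only if Ln ρ ∈ im Zᵀ + span 𝟙; connected-graph case of Theorem 1.) -/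
open Matrix

theorem Real.exp_comp_mem_span_singleton_iff {ι : Type*} {ρ : ι → ℝ} (hρ : ∀ i, 0 < ρ i)
    (x : ι → ℝ) :
    (fun i => Real.exp (x i)) ∈ Submodule.span ℝ {ρ} ↔ ∃ b : ℝ, ∀ i, Real.log (ρ i) = x i + b := by
  rw [Submodule.mem_span_singleton]
  constructor
  · rintro ⟨t, ht⟩
    refine ⟨-Real.log t, fun i => ?_⟩
    have hti : t * ρ i = Real.exp (x i) := congrFun ht i
    have ht0 : t ≠ 0 := by
      rintro rfl
      exact (Real.exp_pos (x i)).ne' (by simpa using hti.symm)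
    have := congrArg Real.log hti
    rw [Real.log_mul ht0 (hρ i).ne', Real.log_exp] at this
    linarith
  · rintro ⟨b, hb⟩
    refine ⟨Real.exp (-b), funext fun i => ?_⟩
    rw [Pi.smul_apply, smul_eq_mul, show x i = Real.log (ρ i) + -b by linarith [hb i],
      Real.exp_add, Real.exp_log (hρ i), mul_comm]

theorem complex_balanced_iff_log_rho_in_im_Zt_plus_span_ones_general
    (c m : ℕ)
    (L : Matrix (Fin c) (Fin c) ℝ)
    (Z : Matrix (Fin m) (Fin c) ℝ)
    (ρ : Fin c → ℝ) (hρ : ∀ i, 0 < ρ i)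
    (hker : LinearMap.ker L.mulVecLin = Submodule.span ℝ {ρ}) :
    (∃ μ : Fin m → ℝ, L *ᵥ (fun i => Real.exp ((Zᵀ *ᵥ μ) i)) = 0) ↔
      ∃ (w : Fin m → ℝ) (b : ℝ), ∀ i, Real.log (ρ i) = (Zᵀ *ᵥ w) i + b := by
  have hbalanced : ∀ μ : Fin m → ℝ, L *ᵥ (fun i => Real.exp ((Zᵀ *ᵥ μ) i)) = 0 ↔
      ∃ b : ℝ, ∀ i, Real.log (ρ i) = (Zᵀ *ᵥ μ) i + b := fun μ => by
    rw [← Matrix.mulVecLin_apply, ← LinearMap.mem_ker, hker,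
      Real.exp_comp_mem_span_singleton_iff hρ]
  simp only [hbalanced]

theorem complex_balanced_iff_log_rho_in_im_Zt_plus_span_ones
    (c m : ℕ) (hc : 0 < c) (hm : 0 < m)
    (L : Matrix (Fin c) (Fin c) ℝ)
    (Z : Matrix (Fin m) (Fin c) ℝ)
    (ρ : Fin c → ℝ) (hρ : ∀ i, 0 < ρ i)
    (hker : LinearMap.ker L.mulVecLin = Submodule.span ℝ {ρ}) :
    (∃ μ : Fin m → ℝ, L *ᵥ (fun i => Real.exp ((Zᵀ *ᵥ μ) i)) = 0) ↔
      ∃ (w : Fin m → ℝ) (b : ℝ), ∀ i, Real.log (ρ i) = (Zᵀ *ᵥ w) i + b :=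
  complex_balanced_iff_log_rho_in_im_Zt_plus_span_ones_general c m L Z ρ hρ hker
end

section
/- Let c, m, r be positive integers, Z a real m×c matrix, D a real c×r matrix, and ρ : Fin c → ℝ a strictly positive vector. Then the vector log∘ρ lies in the subspace (range of v ↦ Zᵀ *ᵥ v) + (kernel of v ↦ Dᵀ *ᵥ v) if and only if for every σ : Fin c → ℝ with Z *ᵥ σ = 0 and σ in the range of u ↦ D *ᵥ u, one has ∏ i, (ρ i) ^ (σ i) = 1 (real exponentiation). -/
/-!
Viewing `ℝⁿ` as a Euclidean space, `Zᵀ` and `Dᵀ` are the adjoints of `Z` and `D`, so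
`im Zᵀ + ker Dᵀ = (ker Z)ᗮ + (im D)ᗮ = (ker Z ⊓ im D)ᗮ`. Hence `log ρ` lies in it exactly when
`σ ⬝ᵥ log ρ = 0` for every `σ ∈ ker Z ⊓ im D`, and `∏ ρᵢ ^ σᵢ = exp (σ ⬝ᵥ log ρ)`.
-/

open Matrix

namespace LinearMap
variable {𝕜 E F G : Type*} [RCLike 𝕜]
  [NormedAddCommGroup E] [InnerProductSpace 𝕜 E] [FiniteDimensional 𝕜 E]
  [NormedAddCommGroup F] [InnerProductSpace 𝕜 F] [FiniteDimensional 𝕜 F]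
  [NormedAddCommGroup G] [InnerProductSpace 𝕜 G] [FiniteDimensional 𝕜 G]

theorem range_adjoint_sup_ker_adjoint (A : E →ₗ[𝕜] F) (B : G →ₗ[𝕜] E) :
    range A.adjoint ⊔ ker B.adjoint = (ker A ⊓ range B)ᗮ := by
  rw [← orthogonal_ker, ← orthogonal_range, ← Submodule.orthogonal_orthogonal (_ ⊔ _),
    ← Submodule.inf_orthogonal, Submodule.orthogonal_orthogonal, Submodule.orthogonal_orthogonal]

end LinearMap

namespace Matrix

open LinearMap

section toLpLin
variable {m n R : Type*} [Fintype n] [DecidableEq n] [CommRing R] (p q : ENNReal)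

theorem toLpLin_eq_comp (M : Matrix m n R) :
    toLpLin p q M = (WithLp.linearEquiv q R (m → R)).symm.toLinearMap ∘ₗ M.mulVecLin ∘ₗ
      (WithLp.linearEquiv p R (n → R)).toLinearMap :=
  rfl

theorem range_toLpLin (M : Matrix m n R) :
    range (toLpLin p q M) =
      (range M.mulVecLin).map (WithLp.linearEquiv q R (m → R)).symm.toLinearMap := by
  rw [toLpLin_eq_comp, range_comp, LinearEquiv.range_comp]

theorem ker_toLpLin (M : Matrix m n R) :
    ker (toLpLin p q M) =
      (ker M.mulVecLin).map (WithLp.linearEquiv p R (n → R)).symm.toLinearMap := by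
  rw [toLpLin_eq_comp, LinearEquiv.ker_comp, ker_comp, Submodule.comap_equiv_eq_map_symm]

end toLpLin

theorem mem_range_transpose_sup_ker_transpose_iff {m n p : Type*} [Fintype m] [Fintype n]
    [Fintype p] (A : Matrix m n ℝ) (B : Matrix n p ℝ) (x : n → ℝ) :
    x ∈ range Aᵀ.mulVecLin ⊔ ker Bᵀ.mulVecLin ↔
      ∀ σ, A *ᵥ σ = 0 → (∃ u, B *ᵥ u = σ) → σ ⬝ᵥ x = 0 := by
  classical
  let e := (WithLp.linearEquiv 2 ℝ (n → ℝ)).symm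
  have hadj : range (toEuclideanLin Aᵀ) ⊔ ker (toEuclideanLin Bᵀ) =
      (ker (toEuclideanLin A) ⊓ range (toEuclideanLin B))ᗮ := by
    simp only [← conjTranspose_eq_transpose_of_trivial, toEuclideanLin_conjTranspose_eq_adjoint]
    exact range_adjoint_sup_ker_adjoint _ _
  rw [range_toLpLin, ker_toLpLin, ← Submodule.map_sup, range_toLpLin, ker_toLpLin,
    ← Submodule.map_inf _ e.injective] at hadj
  rw [← e.symm_apply_apply x, ← Submodule.mem_map_equiv, hadj, Submodule.mem_orthogonal',
    e.surjective.forall]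
  simp only [Submodule.mem_map_equiv, LinearEquiv.symm_apply_apply, Submodule.mem_inf, mem_ker,
    mem_range, mulVecLin_apply, and_imp, EuclideanSpace.inner_eq_star_dotProduct, star_trivial]
  rfl

end Matrix

theorem Real.prod_rpow_eq_exp_dotProduct {ι : Type*} [Fintype ι] {ρ : ι → ℝ} (hρ : ∀ i, 0 < ρ i)
    (σ : ι → ℝ) : ∏ i, ρ i ^ σ i = Real.exp (σ ⬝ᵥ fun i => Real.log (ρ i)) := by
  simp only [dotProduct, Real.exp_sum, Real.rpow_def_of_pos (hρ _), mul_comm]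

theorem log_rho_membership_iff_product_conditions_general
    (c m r : ℕ)
    (Z : Matrix (Fin m) (Fin c) ℝ)
    (D : Matrix (Fin c) (Fin r) ℝ)
    (ρ : Fin c → ℝ) (hρ : ∀ i, 0 < ρ i) :
    ((fun i => Real.log (ρ i)) ∈
        LinearMap.range (Matrix.mulVecLin Zᵀ) ⊔ LinearMap.ker (Matrix.mulVecLin Dᵀ)) ↔
      ∀ σ : Fin c → ℝ, Z *ᵥ σ = 0 → (∃ u : Fin r → ℝ, D *ᵥ u = σ) →
        ∏ i, (ρ i) ^ (σ i) = 1 := by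
  simp only [Matrix.mem_range_transpose_sup_ker_transpose_iff, Real.prod_rpow_eq_exp_dotProduct hρ,
    Real.exp_eq_one_iff]

theorem log_rho_membership_iff_product_conditions
    (c m r : ℕ) (hc : 0 < c) (hm : 0 < m) (hr : 0 < r)
    (Z : Matrix (Fin m) (Fin c) ℝ)
    (D : Matrix (Fin c) (Fin r) ℝ)
    (ρ : Fin c → ℝ) (hρ : ∀ i, 0 < ρ i) :
    ((fun i => Real.log (ρ i)) ∈
        LinearMap.range (Matrix.mulVecLin Zᵀ) ⊔ LinearMap.ker (Matrix.mulVecLin Dᵀ)) ↔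
      ∀ σ : Fin c → ℝ, Z *ᵥ σ = 0 → (∃ u : Fin r → ℝ, D *ᵥ u = σ) →
        ∏ i, (ρ i) ^ (σ i) = 1 :=
  log_rho_membership_iff_product_conditions_general c m r Z D ρ hρ
end

section
/- Let c, m, r be positive integers, Z a real m×c matrix, D a real c×r matrix, and L a real c×c matrix. Suppose: (i) ρ : Fin c → ℝ is strictly positive and the kernel of v ↦ L *ᵥ v equals the span of ρ; (ii) the kernel of v ↦ Dᵀ *ᵥ v equals the span of the all-ones vector 𝟙 (connectedness); and (iii) the only σ : Fin c → ℝ with Z *ᵥ σ = 0 and σ in the range of u ↦ D *ᵥ u is σ = 0 (zero deficiency, ker Z ∩ im D = 0). Then there exists μ : Fin m → ℝ with L *ᵥ (fun i => Real.exp ((Zᵀ *ᵥ μ) i)) = 0, i.e. the network is complex-balanced. -/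
/-!
Zero deficiency together with connectedness says that `ker Z` meets `𝟙^⊥ = im D` only in `0`.
By the Fredholm alternative `im A = (ker Aᵀ)^⊥`, applied to the matrix with columns `Zᵀ` and `𝟙`,
every vector, in particular `log ρ`, is of the form `Zᵀ μ + α 𝟙`. Then `exp (Zᵀ μ) = e^{-α} ρ`
lies in `ker L`.
-/

open Matrix

section Fredholm

variable {K m n : Type*} [Field K] [Fintype m] [Fintype n]

theorem Matrix.mem_range_mulVecLin_iff (A : Matrix m n K) (x : m → K) :
    x ∈ LinearMap.range A.mulVecLin ↔ ∀ y, Aᵀ *ᵥ y = 0 → y ⬝ᵥ x = 0 := by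
  classical
  rw [← Subspace.forall_mem_dualAnnihilator_apply_eq_zero_iff,
    ← (dotProductEquiv K m).toEquiv.forall_congr_right]
  refine forall_congr' fun y => ?_
  simp only [Submodule.mem_dualAnnihilator, LinearMap.mem_range, forall_exists_index,
    forall_apply_eq_imp_iff, LinearEquiv.coe_toEquiv, dotProductEquiv_apply_apply,
    mulVecLin_apply, dotProduct_mulVec, dotProduct_eq_zero_iff, mulVec_transpose]

theorem Matrix.mulVec_surjective_of_injective_transpose {A : Matrix m n K}
    (hA : Function.Injective Aᵀ.mulVec) : Function.Surjective A.mulVec := fun x =>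
  (A.mem_range_mulVecLin_iff x).2 fun y hy => by
    rw [hA (hy.trans Aᵀ.mulVec_zero.symm), zero_dotProduct]

theorem Matrix.mem_range_mulVecLin_of_dotProduct_eq_zero {A : Matrix m n K} {v x : m → K}
    (hker : LinearMap.ker Aᵀ.mulVecLin ≤ K ∙ v) (hx : v ⬝ᵥ x = 0) :
    x ∈ LinearMap.range A.mulVecLin :=
  (A.mem_range_mulVecLin_iff x).2 fun y hy => by
    obtain ⟨a, rfl⟩ := Submodule.mem_span_singleton.1 (hker hy)
    rw [smul_dotProduct, hx, smul_zero]

theorem Matrix.exists_transpose_mulVec_add_smul_eq {Z : Matrix m n K} {v : n → K}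
    (h : ∀ y, Z *ᵥ y = 0 → v ⬝ᵥ y = 0 → y = 0) (x : n → K) :
    ∃ (μ : m → K) (a : K), Zᵀ *ᵥ μ + a • v = x := by
  set M := fromCols Zᵀ (replicateCol Unit v)
  have hM : Function.Injective Mᵀ.mulVec := by
    rw [← coe_mulVecLin, ← LinearMap.ker_eq_bot, LinearMap.ker_eq_bot']
    intro y hy
    simp only [mulVecLin_apply, M, transpose_fromCols, transpose_transpose,
      transpose_replicateCol, fromRows_mulVec] at hy
    exact h y (funext fun i => congrFun hy (.inl i)) (congrFun hy (.inr ()))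
  obtain ⟨w, hw⟩ := mulVec_surjective_of_injective_transpose hM x
  refine ⟨w ∘ Sum.inl, w (Sum.inr ()), ?_⟩
  rw [← hw, fromCols_mulVec]
  congr 1
  ext i
  simp [mulVec, dotProduct, mul_comm]

end Fredholm

theorem zero_deficiency_implies_complex_balanced_general
    (c m r : ℕ)
    (Z : Matrix (Fin m) (Fin c) ℝ)
    (D : Matrix (Fin c) (Fin r) ℝ)
    (L : Matrix (Fin c) (Fin c) ℝ)
    (ρ : Fin c → ℝ) (hρ : ∀ i, 0 < ρ i)
    (hker : LinearMap.ker L.mulVecLin = Submodule.span ℝ {ρ})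
    (hconn : LinearMap.ker (Matrix.mulVecLin Dᵀ) =
      Submodule.span ℝ {(fun _ => 1 : Fin c → ℝ)})
    (hdef : ∀ σ : Fin c → ℝ, Z *ᵥ σ = 0 → (∃ u : Fin r → ℝ, D *ᵥ u = σ) → σ = 0) :
    ∃ μ : Fin m → ℝ, L *ᵥ (fun i => Real.exp ((Zᵀ *ᵥ μ) i)) = 0 := by
  obtain ⟨μ, α, hμ⟩ := exists_transpose_mulVec_add_smul_eq (v := fun _ => 1)
    (fun σ hZσ hσ => hdef σ hZσ (mem_range_mulVecLin_of_dotProduct_eq_zero hconn.le hσ))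
    (fun i => Real.log (ρ i))
  have hexp : (fun i => Real.exp ((Zᵀ *ᵥ μ) i)) = Real.exp (-α) • ρ := by
    funext i
    have hi := congrFun hμ i
    simp only [Pi.add_apply, Pi.smul_apply, smul_eq_mul, mul_one] at hi
    rw [Pi.smul_apply, smul_eq_mul, ← Real.exp_log (hρ i), ← Real.exp_add, ← hi]
    congr 1
    ring
  have hρ_ker : L *ᵥ ρ = 0 := hker.ge (Submodule.mem_span_singleton_self ρ)
  exact ⟨μ, by rw [hexp, mulVec_smul, hρ_ker, smul_zero]⟩

theorem zero_deficiency_implies_complex_balanced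
    (c m r : ℕ) (hc : 0 < c) (hm : 0 < m) (hr : 0 < r)
    (Z : Matrix (Fin m) (Fin c) ℝ)
    (D : Matrix (Fin c) (Fin r) ℝ)
    (L : Matrix (Fin c) (Fin c) ℝ)
    (ρ : Fin c → ℝ) (hρ : ∀ i, 0 < ρ i)
    (hker : LinearMap.ker L.mulVecLin = Submodule.span ℝ {ρ})
    (hconn : LinearMap.ker (Matrix.mulVecLin Dᵀ) =
      Submodule.span ℝ {(fun _ => 1 : Fin c → ℝ)})
    (hdef : ∀ σ : Fin c → ℝ, Z *ᵥ σ = 0 → (∃ u : Fin r → ℝ, D *ᵥ u = σ) → σ = 0) :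
    ∃ μ : Fin m → ℝ, L *ᵥ (fun i => Real.exp ((Zᵀ *ᵥ μ) i)) = 0 :=
  zero_deficiency_implies_complex_balanced_general c m r Z D L ρ hρ hker hconn hdef
end

section
/- Let r, m be positive integers, let k⁺, k⁻ : Fin r → ℝ be strictly positive, and let M be a real m×r matrix. Then there exists w : Fin m → ℝ such that for all e, Real.log (k⁺ e / k⁻ e) = (Mᵀ *ᵥ w) e, if and only if for every σ : Fin r → ℝ with M *ᵥ σ = 0 one has ∏ e, (k⁺ e) ^ (σ e) = ∏ e, (k⁻ e) ^ (σ e) (real exponentiation). (Equivalence of Ln K^eq ∈ im Mᵀ with the Wegscheider conditions; taking M the stoichiometric matrix gives detailed balancing, taking M the incidence matrix gives formal balancing.) -/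
open Matrix

lemma key_surj {r m : ℕ} (M : Matrix (Fin m) (Fin r) ℝ) (v : Fin r → ℝ)
    (h : ∀ σ, M *ᵥ σ = 0 → v ⬝ᵥ σ = 0) : ∃ w, v = Mᵀ *ᵥ w := by
  let e1 := WithLp.linearEquiv 2 ℝ (Fin m → ℝ)
  let e2 := WithLp.linearEquiv 2 ℝ (Fin r → ℝ)
  let f : EuclideanSpace ℝ (Fin m) →ₗ[ℝ] EuclideanSpace ℝ (Fin r) :=
    e2.symm.toLinearMap ∘ₗ (Matrix.mulVecLin Mᵀ) ∘ₗ e1.toLinearMap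
  let S : Submodule ℝ (EuclideanSpace ℝ (Fin r)) := LinearMap.range f
  have hf : ∀ w : Fin m → ℝ, f (e1.symm w) = e2.symm (Mᵀ *ᵥ w) := by
    intro w; simp [f, Matrix.mulVec_transpose]
  have hv : (e2.symm v) ∈ Sᗮᗮ := by
    rw [Submodule.mem_orthogonal]
    intro σ hσ
    have hMσ : M *ᵥ (e2 σ) = 0 := by
      have h0 := (Submodule.mem_orthogonal S σ).mp hσ (f (e1.symm (M *ᵥ e2 σ))) ⟨_, rfl⟩
      rw [hf] at h0
      have h1 : (Mᵀ *ᵥ (M *ᵥ e2 σ)) ⬝ᵥ (e2 σ) = 0 := by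
        simpa [PiLp.inner_apply, RCLike.inner_apply, dotProduct, e2, mul_comm] using h0
      rw [Matrix.mulVec_transpose, ← Matrix.dotProduct_mulVec,
        dotProduct_self_eq_zero] at h1
      exact h1
    have h2 := h (e2 σ) hMσ
    simp only [PiLp.inner_apply, RCLike.inner_apply, starRingEnd_apply, star_trivial]
    simpa [dotProduct, e2, mul_comm] using h2
  rw [Submodule.orthogonal_orthogonal] at hv
  obtain ⟨w, hw⟩ := hv
  refine ⟨e1 w, ?_⟩
  have := (hf (e1 w)).symm.trans (by simpa [e1] using hw)
  exact (e2.symm.injective this).symm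

theorem log_Keq_in_image_iff_wegscheider
    (r m : ℕ) (hr : 0 < r) (hm : 0 < m)
    (kp km : Fin r → ℝ) (hkp : ∀ e, 0 < kp e) (hkm : ∀ e, 0 < km e)
    (M : Matrix (Fin m) (Fin r) ℝ) :
    (∃ w : Fin m → ℝ, ∀ e, Real.log (kp e / km e) = (Mᵀ *ᵥ w) e) ↔
      ∀ σ : Fin r → ℝ, M *ᵥ σ = 0 →
        ∏ e, (kp e) ^ (σ e) = ∏ e, (km e) ^ (σ e) := by
  set v : Fin r → ℝ := fun e => Real.log (kp e / km e) with hv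
  have hprod : ∀ σ : Fin r → ℝ,
      (∏ e, (kp e) ^ (σ e) = ∏ e, (km e) ^ (σ e)) ↔ v ⬝ᵥ σ = 0 := by
    intro σ
    have hp : (0:ℝ) < ∏ e, (kp e) ^ (σ e) :=
      Finset.prod_pos fun e _ => Real.rpow_pos_of_pos (hkp e) _
    have hq : (0:ℝ) < ∏ e, (km e) ^ (σ e) :=
      Finset.prod_pos fun e _ => Real.rpow_pos_of_pos (hkm e) _
    rw [← Real.log_injOn_pos.eq_iff (Set.mem_Ioi.mpr hp) (Set.mem_Ioi.mpr hq)]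
    rw [Real.log_prod (fun e _ => (Real.rpow_pos_of_pos (hkp e) _).ne'),
        Real.log_prod (fun e _ => (Real.rpow_pos_of_pos (hkm e) _).ne')]
    simp_rw [Real.log_rpow (hkp _), Real.log_rpow (hkm _)]
    have hve : ∀ e, v e * σ e = σ e * Real.log (kp e) - σ e * Real.log (km e) := by
      intro e
      simp only [hv, Real.log_div (hkp e).ne' (hkm e).ne']
      ring
    rw [dotProduct]
    constructor
    · intro h
      calc ∑ e, v e * σ e = ∑ e, (σ e * Real.log (kp e) - σ e * Real.log (km e)) :=
            Finset.sum_congr rfl fun e _ => hve e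
        _ = 0 := by rw [Finset.sum_sub_distrib, h, sub_self]
    · intro h
      have h2 : ∑ e, (σ e * Real.log (kp e) - σ e * Real.log (km e)) = 0 := by
        rw [← h]; exact Finset.sum_congr rfl fun e _ => (hve e).symm
      rw [Finset.sum_sub_distrib, sub_eq_zero] at h2
      exact h2
  constructor
  · rintro ⟨w, hw⟩ σ hσ
    rw [hprod σ]
    have hvw : v = Mᵀ *ᵥ w := funext hw
    rw [hvw, Matrix.mulVec_transpose, ← Matrix.dotProduct_mulVec, hσ, dotProduct_zero]
  · intro h
    obtain ⟨w, hw⟩ := key_surj M v (fun σ hσ => (hprod σ).mp (h σ hσ))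
    exact ⟨w, fun e => congrFun hw e⟩
end

section
/- Consider a reversible reaction graph on c vertices: a finite edge set E with tail and head maps t, h : E → Fin c satisfying t e ≠ h e, and strictly positive constants k⁺, k⁻ : E → ℝ, with Laplacian L defined by L i j = −(∑_{e : t e = j ∧ h e = i} k⁺ e + ∑_{e : t e = i ∧ h e = j} k⁻ e) for i ≠ j and L j j = ∑_{e : t e = j} k⁺ e + ∑_{e : h e = j} k⁻ e. If x : Fin c → ℝ satisfies Real.log (k⁺ e) − Real.log (k⁻ e) = x (h e) − x (t e) for every edge e, then the matrix L * Matrix.diagonal (fun i => Real.exp (x i)) is symmetric and L *ᵥ (fun i => Real.exp (x i)) = 0. -/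
/-! The potential makes every edge balanced, `k⁺ e · exp (x (t e)) = k⁻ e · exp (x (h e))`,
which is exactly the symmetry of `L * diagonal (exp ∘ x)`. By that symmetry,
`(L *ᵥ exp ∘ x) i = ∑ j, L j i * exp (x i)`, and the columns of a Laplacian sum to zero. -/

open Matrix

/-- The weighted Laplacian matrix of a reversible reaction graph on `c` vertices,
with edge set `E`, tail and head maps `t, h`, and forward and reverse reaction
constants `kp, km`. -/
def reactionLaplacian (c : ℕ) {E : Type*} [Fintype E]
    (t h : E → Fin c) (kp km : E → ℝ) : Matrix (Fin c) (Fin c) ℝ :=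
  fun i j =>
    if i = j then
      (∑ e ∈ Finset.univ.filter (fun e => t e = j), kp e) +
        (∑ e ∈ Finset.univ.filter (fun e => h e = j), km e)
    else
      -((∑ e ∈ Finset.univ.filter (fun e => t e = j ∧ h e = i), kp e) +
        (∑ e ∈ Finset.univ.filter (fun e => t e = i ∧ h e = j), km e))

theorem Matrix.mulVec_eq_zero_of_isSymm_mul_diagonal {n α : Type*} [Fintype n] [DecidableEq n]
    [NonUnitalNonAssocSemiring α] {A : Matrix n n α} {v : n → α}
    (hsymm : (A * diagonal v).IsSymm) (hcol : ∀ j, ∑ i, A i j = 0) : A *ᵥ v = 0 := by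
  funext i
  have hswap : ∀ j, A i j * v j = A j i * v i := fun j => by
    simpa only [transpose_apply, mul_diagonal] using congrFun (congrFun hsymm i) j |>.symm
  calc (A *ᵥ v) i = ∑ j, A j i * v i := Finset.sum_congr rfl fun j _ => hswap j
    _ = 0 := by rw [← Finset.sum_mul, hcol i, zero_mul]

theorem mul_exp_eq_mul_exp_of_log_sub_log_eq {a b x y : ℝ} (ha : 0 < a) (hb : 0 < b)
    (h : Real.log a - Real.log b = y - x) : a * Real.exp x = b * Real.exp y := by
  rw [← Real.exp_log ha, ← Real.exp_log hb, ← Real.exp_add, ← Real.exp_add]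
  congr 1
  linarith

section reactionLaplacian

variable {c : ℕ} {E : Type*} [Fintype E] (t h : E → Fin c) (kp km : E → ℝ)

/-- Without self-loops the off-diagonal formula vanishes on the diagonal, so one formula covers
every entry. -/
theorem reactionLaplacian_apply (hth : ∀ e, t e ≠ h e) (i j : Fin c) :
    reactionLaplacian c t h kp km i j =
      (if i = j then
        (∑ e ∈ Finset.univ.filter (fun e => t e = j), kp e) +
          (∑ e ∈ Finset.univ.filter (fun e => h e = j), km e)
      else 0) -
      ((∑ e ∈ Finset.univ.filter (fun e => t e = j ∧ h e = i), kp e) +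
        (∑ e ∈ Finset.univ.filter (fun e => t e = i ∧ h e = j), km e)) := by
  unfold reactionLaplacian
  split_ifs with hij
  · subst hij
    have hnone : Finset.univ.filter (fun e => t e = i ∧ h e = i) = ∅ :=
      Finset.filter_false_of_mem fun e _ he => hth e (he.1.trans he.2.symm)
    simp [hnone]
  · ring

theorem sum_reactionLaplacian_apply (hth : ∀ e, t e ≠ h e) (j : Fin c) :
    ∑ i, reactionLaplacian c t h kp km i j = 0 := by
  have hout : ∑ i, ∑ e ∈ Finset.univ.filter (fun e => t e = j ∧ h e = i), kp e =
      ∑ e ∈ Finset.univ.filter (fun e => t e = j), kp e := by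
    simpa [Finset.filter_filter] using Finset.sum_fiberwise (Finset.univ.filter (t · = j)) h kp
  have hin : ∑ i, ∑ e ∈ Finset.univ.filter (fun e => t e = i ∧ h e = j), km e =
      ∑ e ∈ Finset.univ.filter (fun e => h e = j), km e := by
    simpa [Finset.filter_filter, and_comm] using
      Finset.sum_fiberwise (Finset.univ.filter (h · = j)) t km
  simp only [reactionLaplacian_apply t h kp km hth, Finset.sum_sub_distrib,
    Finset.sum_add_distrib, hout, hin, Finset.sum_ite_eq', Finset.mem_univ, if_true, sub_self]

theorem reactionLaplacian_mul_diagonal_isSymm {v : Fin c → ℝ}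
    (hflux : ∀ e, kp e * v (t e) = km e * v (h e)) :
    (reactionLaplacian c t h kp km * diagonal v).IsSymm := by
  ext i j
  simp only [transpose_apply, mul_diagonal]
  rcases eq_or_ne i j with rfl | hij
  · rfl
  simp only [reactionLaplacian, if_neg hij, if_neg hij.symm, neg_mul, add_mul, Finset.sum_mul,
    neg_inj, add_comm (∑ e ∈ Finset.univ.filter (fun e => t e = j ∧ h e = i), kp e * v j)]
  congr 1 <;> refine Finset.sum_congr rfl fun e he => ?_ <;>
    obtain ⟨-, rfl, rfl⟩ := Finset.mem_filter.mp he
  exacts [hflux e, (hflux e).symm]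

end reactionLaplacian

theorem detailed_balanced_potential_gives_symmetric_and_balanced_general
    (c : ℕ) (E : Type*) [Fintype E]
    (t h : E → Fin c) (hth : ∀ e, t e ≠ h e)
    (kp km : E → ℝ) (hkp : ∀ e, 0 < kp e) (hkm : ∀ e, 0 < km e)
    (x : Fin c → ℝ)
    (hx : ∀ e, Real.log (kp e) - Real.log (km e) = x (h e) - x (t e)) :
    (reactionLaplacian c t h kp km *
        Matrix.diagonal (fun i => Real.exp (x i))).IsSymm ∧
      reactionLaplacian c t h kp km *ᵥ (fun i => Real.exp (x i)) = 0 := by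
  have hsymm := reactionLaplacian_mul_diagonal_isSymm t h kp km (v := fun i => Real.exp (x i))
    fun e => mul_exp_eq_mul_exp_of_log_sub_log_eq (hkp e) (hkm e) (hx e)
  exact ⟨hsymm,
    mulVec_eq_zero_of_isSymm_mul_diagonal hsymm (sum_reactionLaplacian_apply t h kp km hth)⟩

theorem detailed_balanced_potential_gives_symmetric_and_balanced
    (c : ℕ) (hc : 0 < c) (E : Type*) [Fintype E]
    (t h : E → Fin c) (hth : ∀ e, t e ≠ h e)
    (kp km : E → ℝ) (hkp : ∀ e, 0 < kp e) (hkm : ∀ e, 0 < km e)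
    (x : Fin c → ℝ)
    (hx : ∀ e, Real.log (kp e) - Real.log (km e) = x (h e) - x (t e)) :
    (reactionLaplacian c t h kp km *
        Matrix.diagonal (fun i => Real.exp (x i))).IsSymm ∧
      reactionLaplacian c t h kp km *ᵥ (fun i => Real.exp (x i)) = 0 :=
  detailed_balanced_potential_gives_symmetric_and_balanced_general c E t h hth kp km hkp hkm x hx
end

section
/- Consider a reversible reaction graph on c vertices (finite edge set E, maps t, h : E → Fin c with t e ≠ h e, positive constants k⁺, k⁻ : E → ℝ, and Laplacian L as below) with no parallel edges, i.e. distinct edges have distinct underlying unordered vertex pairs {t e, h e}. Let ρ : Fin c → ℝ be strictly positive. Then the matrix L * Matrix.diagonal ρ is symmetric if and only if for every edge e, Real.log (k⁺ e / k⁻ e) = Real.log (ρ (h e)) − Real.log (ρ (t e)). (Equivalence (1) ⟺ (2) of Theorem 2: symmetry of L diag(ρ) is equivalent to Ln K^eq = D̄ᵀ Ln ρ.) -/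
/-!
Off the diagonal, `(L * diagonal ρ) i j` is minus the total rate `∑ kp e ρ j + ∑ km e ρ j` over
the edges between `j` and `i`; with no parallel edges there is at most one such edge `e`, and the
symmetry condition for the pair `{t e, h e}` is exactly detailed balance
`kp e * ρ (t e) = km e * ρ (h e)`. Taking logarithms of positive quantities turns this into
`log (kp e / km e) = log ρ (h e) - log ρ (t e)`.
-/

open Matrix

open Finset

theorem Real.log_div_eq_log_sub_log_iff {a b x y : ℝ} (ha : 0 < a) (hb : 0 < b) (hx : 0 < x)
    (hy : 0 < y) : Real.log (a / b) = Real.log y - Real.log x ↔ a * x = b * y := by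
  rw [← Real.log_div hy.ne' hx.ne', Real.log_injOn_pos.eq_iff (div_pos ha hb) (div_pos hy hx),
    div_eq_div_iff hb.ne' hx.ne', mul_comm y b]

section ReactionGraph

variable {α E : Type*} [DecidableEq α] [Fintype E] {t h : E → α}

theorem filter_tail_head_eq_singleton
    (hpar : Function.Injective (fun e => ({t e, h e} : Finset α))) (e : E) :
    univ.filter (fun e' => t e' = t e ∧ h e' = h e) = {e} := by
  ext e'
  simp only [mem_filter, mem_univ, true_and, mem_singleton]
  constructor
  · rintro ⟨ht, hh⟩
    exact hpar (by simp only [ht, hh])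
  · rintro rfl
    exact ⟨rfl, rfl⟩

theorem filter_tail_head_swap_eq_empty (hth : ∀ e, t e ≠ h e)
    (hpar : Function.Injective (fun e => ({t e, h e} : Finset α))) (e : E) :
    univ.filter (fun e' => t e' = h e ∧ h e' = t e) = ∅ := by
  refine filter_false_of_mem fun e' _ ⟨ht, hh⟩ => ?_
  have : e' = e := hpar (by simp only [ht, hh, pair_comm])
  exact hth e (this ▸ ht)

end ReactionGraph

section Laplacian

variable {c : ℕ} {E : Type*} [Fintype E] {t h : E → Fin c} {kp km : E → ℝ}

theorem reactionLaplacian_mul_diagonal_apply_of_ne (ρ : Fin c → ℝ) {i j : Fin c} (hij : i ≠ j) :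
    (reactionLaplacian c t h kp km * diagonal ρ) i j =
      -((∑ e ∈ univ.filter (fun e => t e = j ∧ h e = i), kp e * ρ j) +
        ∑ e ∈ univ.filter (fun e => t e = i ∧ h e = j), km e * ρ j) := by
  simp only [mul_diagonal, reactionLaplacian, if_neg hij, neg_mul, add_mul, sum_mul]

theorem reactionLaplacian_mul_diagonal_isSymm_of_detailed_balance {ρ : Fin c → ℝ}
    (hbal : ∀ e, kp e * ρ (t e) = km e * ρ (h e)) :
    (reactionLaplacian c t h kp km * diagonal ρ).IsSymm := by
  refine IsSymm.ext fun i j => ?_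
  rcases eq_or_ne i j with rfl | hij
  · rfl
  rw [reactionLaplacian_mul_diagonal_apply_of_ne ρ hij,
    reactionLaplacian_mul_diagonal_apply_of_ne ρ hij.symm, add_comm]
  congr 2 <;> refine sum_congr rfl fun e he => ?_ <;> obtain ⟨-, rfl, rfl⟩ := mem_filter.1 he
  exacts [(hbal e).symm, hbal e]

theorem detailed_balance_of_reactionLaplacian_mul_diagonal_isSymm (hth : ∀ e, t e ≠ h e)
    (hpar : Function.Injective (fun e => ({t e, h e} : Finset (Fin c)))) {ρ : Fin c → ℝ}
    (hsymm : (reactionLaplacian c t h kp km * diagonal ρ).IsSymm) (e : E) :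
    kp e * ρ (t e) = km e * ρ (h e) := by
  have := hsymm.apply (h e) (t e)
  rw [reactionLaplacian_mul_diagonal_apply_of_ne ρ (hth e).symm,
    reactionLaplacian_mul_diagonal_apply_of_ne ρ (hth e), filter_tail_head_eq_singleton hpar,
    filter_tail_head_swap_eq_empty hth hpar] at this
  simpa using this.symm

end Laplacian

theorem symmetric_iff_log_Keq_eq_Dt_log_rho_general
    (c : ℕ) (E : Type*) [Fintype E]
    (t h : E → Fin c) (hth : ∀ e, t e ≠ h e)
    (hpar : Function.Injective (fun e => ({t e, h e} : Finset (Fin c))))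
    (kp km : E → ℝ) (hkp : ∀ e, 0 < kp e) (hkm : ∀ e, 0 < km e)
    (ρ : Fin c → ℝ) (hρ : ∀ i, 0 < ρ i) :
    (reactionLaplacian c t h kp km * Matrix.diagonal ρ).IsSymm ↔
      ∀ e, Real.log (kp e / km e) = Real.log (ρ (h e)) - Real.log (ρ (t e)) := by
  simp only [fun e => Real.log_div_eq_log_sub_log_iff (hkp e) (hkm e) (hρ (t e)) (hρ (h e))]
  exact ⟨detailed_balance_of_reactionLaplacian_mul_diagonal_isSymm hth hpar,
    reactionLaplacian_mul_diagonal_isSymm_of_detailed_balance⟩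

theorem symmetric_iff_log_Keq_eq_Dt_log_rho
    (c : ℕ) (hc : 0 < c) (E : Type*) [Fintype E]
    (t h : E → Fin c) (hth : ∀ e, t e ≠ h e)
    (hpar : Function.Injective (fun e => ({t e, h e} : Finset (Fin c))))
    (kp km : E → ℝ) (hkp : ∀ e, 0 < kp e) (hkm : ∀ e, 0 < km e)
    (ρ : Fin c → ℝ) (hρ : ∀ i, 0 < ρ i) :
    (reactionLaplacian c t h kp km * Matrix.diagonal ρ).IsSymm ↔
      ∀ e, Real.log (kp e / km e) = Real.log (ρ (h e)) - Real.log (ρ (t e)) :=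
  symmetric_iff_log_Keq_eq_Dt_log_rho_general c E t h hth hpar kp km hkp hkm ρ hρ
end

section
/- Consider a reversible reaction graph on c vertices (finite edge set E, maps t, h : E → Fin c with t e ≠ h e, positive constants k⁺, k⁻ : E → ℝ, and Laplacian L as below), together with a complex composition matrix Z (a real m×c matrix). Let ρ : Fin c → ℝ be strictly positive with the kernel of v ↦ L *ᵥ v equal to the span of ρ. Then the network is detailed-balanced, i.e. there exists w : Fin m → ℝ with Real.log (k⁺ e / k⁻ e) = (Zᵀ *ᵥ w) (h e) − (Zᵀ *ᵥ w) (t e) for all e, if and only if it is both formally balanced (there exists x : Fin c → ℝ with Real.log (k⁺ e / k⁻ e) = x (h e) − x (t e) for all e) and complex-balanced (there exists μ : Fin m → ℝ with L *ᵥ (fun i => Real.exp ((Zᵀ *ᵥ μ) i)) = 0). (Corollary 2 of the paper, proved in van der Schaft et al. following Dickenstein–Pérez Millán.) -/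
open Matrix

/-!
A potential `x` with `log (k⁺ e / k⁻ e) = x (h e) - x (t e)` makes every edge flux
`k⁺ e * exp (x (t e)) - k⁻ e * exp (x (h e))` vanish, so `exp ∘ x` lies in `ker L`; with
`x = Zᵀ w` this shows that detailed balance implies complex balance. Conversely, formal and
complex balance put both `exp ∘ x` and `exp ∘ Zᵀ μ` on the line `ker L = span {ρ}`, so
`x - Zᵀ μ` is constant and `Zᵀ μ` is itself a potential.
-/

section

variable {c : ℕ} {E : Type*} (t h : E → Fin c) (kp km : E → ℝ)

def reactionIncidence : Matrix (Fin c) E ℝ :=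
  of fun i e => (if t e = i then 1 else 0) - (if h e = i then 1 else 0)

def reactionFluxMatrix : Matrix E (Fin c) ℝ :=
  of fun e j => (if t e = j then kp e else 0) - (if h e = j then km e else 0)

theorem reactionFluxMatrix_mulVec (v : Fin c → ℝ) :
    reactionFluxMatrix t h kp km *ᵥ v = fun e => kp e * v (t e) - km e * v (h e) := by
  ext e
  simp [reactionFluxMatrix, mulVec, dotProduct, sub_mul, Finset.sum_sub_distrib, ite_mul]

variable {t h} [Fintype E]

theorem reactionLaplacian_eq_incidence_mul (hth : ∀ e, t e ≠ h e) :
    reactionLaplacian c t h kp km = reactionIncidence t h * reactionFluxMatrix t h kp km := by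
  ext i j
  simp only [reactionLaplacian, reactionIncidence, reactionFluxMatrix, mul_apply, of_apply,
    Finset.sum_filter]
  split_ifs with hij
  · subst hij
    rw [← Finset.sum_add_distrib]
    refine Finset.sum_congr rfl fun e _ => ?_
    have := hth e
    split_ifs <;> simp_all
  · rw [← Finset.sum_add_distrib, ← Finset.sum_neg_distrib]
    refine Finset.sum_congr rfl fun e _ => ?_
    have := hth e
    split_ifs <;> simp_all

theorem reactionLaplacian_mulVec_eq_zero (hth : ∀ e, t e ≠ h e) {v : Fin c → ℝ}
    (hv : ∀ e, kp e * v (t e) = km e * v (h e)) : reactionLaplacian c t h kp km *ᵥ v = 0 := by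
  have hflux : reactionFluxMatrix t h kp km *ᵥ v = 0 := by
    rw [reactionFluxMatrix_mulVec]
    exact funext fun e => sub_eq_zero.mpr (hv e)
  rw [reactionLaplacian_eq_incidence_mul kp km hth, ← mulVec_mulVec, hflux, mulVec_zero]

end

theorem mul_exp_eq_mul_exp_of_log_div_eq {a b x y : ℝ} (ha : 0 < a) (hb : 0 < b)
    (hlog : Real.log (a / b) = y - x) : a * Real.exp x = b * Real.exp y := by
  have hexp : a / b = Real.exp y / Real.exp x := by
    rw [← Real.exp_sub, ← hlog, Real.exp_log (div_pos ha hb)]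
  rw [div_eq_div_iff hb.ne' (Real.exp_pos x).ne'] at hexp
  linarith

theorem reactionLaplacian_mulVec_exp_eq_zero {c : ℕ} {E : Type*} [Fintype E] {t h : E → Fin c}
    (hth : ∀ e, t e ≠ h e) {kp km : E → ℝ} (hkp : ∀ e, 0 < kp e) (hkm : ∀ e, 0 < km e)
    {x : Fin c → ℝ} (hx : ∀ e, Real.log (kp e / km e) = x (h e) - x (t e)) :
    reactionLaplacian c t h kp km *ᵥ (fun i => Real.exp (x i)) = 0 :=
  reactionLaplacian_mulVec_eq_zero kp km hth fun e =>
    mul_exp_eq_mul_exp_of_log_div_eq (hkp e) (hkm e) (hx e)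

theorem exists_forall_eq_add_of_exp_mem_span_singleton {ι : Type*} {ρ x y : ι → ℝ}
    (hx : (fun i => Real.exp (x i)) ∈ Submodule.span ℝ {ρ})
    (hy : (fun i => Real.exp (y i)) ∈ Submodule.span ℝ {ρ}) :
    ∃ C, ∀ i, x i = y i + C := by
  obtain ⟨a, ha⟩ := Submodule.mem_span_singleton.mp hx
  obtain ⟨b, hb⟩ := Submodule.mem_span_singleton.mp hy
  refine ⟨Real.log (a / b), fun i => ?_⟩
  have hai : a * ρ i = Real.exp (x i) := congrFun ha i
  have hbi : b * ρ i = Real.exp (y i) := congrFun hb i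
  have hρi : ρ i ≠ 0 := right_ne_zero_of_mul (hbi ▸ (Real.exp_pos (y i)).ne')
  have hratio : Real.exp (x i - y i) = a / b := by
    rw [Real.exp_sub, ← hai, ← hbi, mul_div_mul_right a b hρi]
  rw [← hratio, Real.log_exp]
  ring

theorem detailed_balanced_iff_formally_balanced_and_complex_balanced_general
    (c m : ℕ) (E : Type*) [Fintype E]
    (t h : E → Fin c) (hth : ∀ e, t e ≠ h e)
    (kp km : E → ℝ) (hkp : ∀ e, 0 < kp e) (hkm : ∀ e, 0 < km e)
    (Z : Matrix (Fin m) (Fin c) ℝ)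
    (ρ : Fin c → ℝ)
    (hker : LinearMap.ker (reactionLaplacian c t h kp km).mulVecLin =
      Submodule.span ℝ {ρ}) :
    (∃ w : Fin m → ℝ, ∀ e,
        Real.log (kp e / km e) = (Zᵀ *ᵥ w) (h e) - (Zᵀ *ᵥ w) (t e)) ↔
      ((∃ x : Fin c → ℝ, ∀ e, Real.log (kp e / km e) = x (h e) - x (t e)) ∧
        (∃ μ : Fin m → ℝ,
          reactionLaplacian c t h kp km *ᵥ (fun i => Real.exp ((Zᵀ *ᵥ μ) i)) = 0)) := by
  constructor
  · rintro ⟨w, hw⟩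
    exact ⟨⟨Zᵀ *ᵥ w, hw⟩, w, reactionLaplacian_mulVec_exp_eq_zero hth hkp hkm hw⟩
  · rintro ⟨⟨x, hx⟩, μ, hμ⟩
    have mem_span : ∀ y : Fin c → ℝ,
        reactionLaplacian c t h kp km *ᵥ (fun i => Real.exp (y i)) = 0 →
          (fun i => Real.exp (y i)) ∈ Submodule.span ℝ {ρ} := fun y hy => by
      rwa [← hker, LinearMap.mem_ker, mulVecLin_apply]
    obtain ⟨C, hC⟩ := exists_forall_eq_add_of_exp_mem_span_singleton
      (mem_span x (reactionLaplacian_mulVec_exp_eq_zero hth hkp hkm hx)) (mem_span _ hμ)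
    refine ⟨μ, fun e => ?_⟩
    rw [hx e, hC, hC]
    ring

theorem detailed_balanced_iff_formally_balanced_and_complex_balanced
    (c m : ℕ) (hc : 0 < c) (hm : 0 < m) (E : Type*) [Fintype E]
    (t h : E → Fin c) (hth : ∀ e, t e ≠ h e)
    (kp km : E → ℝ) (hkp : ∀ e, 0 < kp e) (hkm : ∀ e, 0 < km e)
    (Z : Matrix (Fin m) (Fin c) ℝ)
    (ρ : Fin c → ℝ) (hρ : ∀ i, 0 < ρ i)
    (hker : LinearMap.ker (reactionLaplacian c t h kp km).mulVecLin =
      Submodule.span ℝ {ρ}) :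
    (∃ w : Fin m → ℝ, ∀ e,
        Real.log (kp e / km e) = (Zᵀ *ᵥ w) (h e) - (Zᵀ *ᵥ w) (t e)) ↔
      ((∃ x : Fin c → ℝ, ∀ e, Real.log (kp e / km e) = x (h e) - x (t e)) ∧
        (∃ μ : Fin m → ℝ,
          reactionLaplacian c t h kp km *ᵥ (fun i => Real.exp ((Zᵀ *ᵥ μ) i)) = 0)) :=
  detailed_balanced_iff_formally_balanced_and_complex_balanced_general c m E t h hth kp km hkp hkm Z
    ρ hker
end

section
/- Consider a reversible reaction graph on c vertices (finite edge set E, maps t, h : E → Fin c with t e ≠ h e, positive constants k⁺, k⁻ : E → ℝ, Laplacian L and incidence matrix D̄ as below). Let ρ : Fin c → ℝ be strictly positive and suppose k⁺ e * ρ (t e) = k⁻ e * ρ (h e) for every edge e. Then L * Matrix.diagonal ρ = D̄ * Matrix.diagonal (fun e => k⁺ e * ρ (t e)) * D̄ᵀ. (The balanced Laplacian of a detailed-balanced network factors as D̄ 𝒦 D̄ᵀ with positive diagonal conductance matrix 𝒦.) -/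
/-!
The Laplacian is the sum over edges `e` of the Laplacians of the single reactions `t e ⇌ h e`,
namely `k⁺ (δ_t - δ_h) δ_tᵀ + k⁻ (δ_h - δ_t) δ_hᵀ` with `δ_i = Pi.single i 1`. Multiplying on
the right by `diag ρ` scales `δ_tᵀ` by `ρ_t` and `δ_hᵀ` by `ρ_h`, so detailed balance
`k⁺ ρ_t = k⁻ ρ_h = κ` turns each edge term into `κ (δ_h - δ_t) (δ_h - δ_t)ᵀ`. Since `δ_h - δ_t`
is the `e`-th column of `D̄`, summing over the edges gives `D̄ diag(κ) D̄ᵀ`.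
-/

open Matrix

/-- The incidence matrix of a reversible reaction graph: entry `1` at the head
of each edge, `-1` at its tail, `0` elsewhere. -/
def incidenceMatrix (c : ℕ) {E : Type*} [Fintype E]
    (t h : E → Fin c) : Matrix (Fin c) E ℝ :=
  fun i e => if i = h e then 1 else if i = t e then -1 else 0

theorem Matrix.mul_diagonal_mul_transpose_eq_sum {m n R : Type*} [Fintype n] [DecidableEq n]
    [CommSemiring R] (A : Matrix m n R) (w : n → R) :
    A * diagonal w * Aᵀ = ∑ k, w k • vecMulVec (A.col k) (A.col k) := by
  ext i j
  rw [mul_apply, Matrix.sum_apply]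
  simp only [mul_diagonal, transpose_apply, Matrix.smul_apply, vecMulVec_apply, col_apply,
    smul_eq_mul]
  exact Finset.sum_congr rfl fun k _ => by ring

section

variable {V R : Type*} [DecidableEq V] [CommRing R]

def reactionEdgeLaplacian (a b : V) (kf kr : R) : Matrix V V R :=
  kf • vecMulVec (Pi.single a 1 - Pi.single b 1) (Pi.single a 1) +
    kr • vecMulVec (Pi.single b 1 - Pi.single a 1) (Pi.single b 1)

theorem reactionEdgeLaplacian_mul_diagonal [Fintype V] {a b : V} {kf kr : R} {ρ : V → R}
    (hdb : kf * ρ a = kr * ρ b) :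
    reactionEdgeLaplacian a b kf kr * diagonal ρ =
      (kf * ρ a) • vecMulVec (Pi.single b 1 - Pi.single a 1) (Pi.single b 1 - Pi.single a 1) := by
  ext i j
  simp only [reactionEdgeLaplacian, mul_diagonal, Matrix.add_apply, Matrix.smul_apply,
    vecMulVec_apply, Pi.sub_apply, Pi.single_apply, smul_eq_mul]
  split_ifs <;> simp_all

end

theorem reactionLaplacian_eq_sum (c : ℕ) {E : Type*} [Fintype E]
    (t h : E → Fin c) (hth : ∀ e, t e ≠ h e) (kp km : E → ℝ) :
    reactionLaplacian c t h kp km = ∑ e, reactionEdgeLaplacian (t e) (h e) (kp e) (km e) := by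
  ext i j
  rw [Matrix.sum_apply]
  simp only [reactionLaplacian, reactionEdgeLaplacian, Matrix.add_apply, Matrix.smul_apply,
    vecMulVec_apply, Pi.sub_apply, Pi.single_apply, smul_eq_mul]
  split_ifs
  · rw [Finset.sum_filter, Finset.sum_filter, ← Finset.sum_add_distrib]
    exact Finset.sum_congr rfl fun e _ => by grind
  · rw [Finset.sum_filter, Finset.sum_filter, ← Finset.sum_add_distrib, ← Finset.sum_neg_distrib]
    exact Finset.sum_congr rfl fun e _ => by grind

theorem incidenceMatrix_col (c : ℕ) {E : Type*} [Fintype E]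
    (t h : E → Fin c) (hth : ∀ e, t e ≠ h e) (e : E) :
    (incidenceMatrix c t h).col e = Pi.single (h e) 1 - Pi.single (t e) 1 := by
  ext i
  simp only [col_apply, incidenceMatrix, Pi.sub_apply, Pi.single_apply]
  grind

theorem balanced_laplacian_factorization_general
    (c : ℕ) (E : Type*) [Fintype E] [DecidableEq E]
    (t h : E → Fin c) (hth : ∀ e, t e ≠ h e)
    (kp km : E → ℝ)
    (ρ : Fin c → ℝ)
    (hdb : ∀ e, kp e * ρ (t e) = km e * ρ (h e)) :
    reactionLaplacian c t h kp km * Matrix.diagonal ρ =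
      incidenceMatrix c t h * Matrix.diagonal (fun e => kp e * ρ (t e)) *
        (incidenceMatrix c t h)ᵀ := by
  rw [reactionLaplacian_eq_sum c t h hth, Finset.sum_mul, mul_diagonal_mul_transpose_eq_sum]
  refine Finset.sum_congr rfl fun e _ => ?_
  rw [reactionEdgeLaplacian_mul_diagonal (hdb e), incidenceMatrix_col c t h hth]

theorem balanced_laplacian_factorization
    (c : ℕ) (hc : 0 < c) (E : Type*) [Fintype E] [DecidableEq E]
    (t h : E → Fin c) (hth : ∀ e, t e ≠ h e)
    (kp km : E → ℝ) (hkp : ∀ e, 0 < kp e) (hkm : ∀ e, 0 < km e)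
    (ρ : Fin c → ℝ) (hρ : ∀ i, 0 < ρ i)
    (hdb : ∀ e, kp e * ρ (t e) = km e * ρ (h e)) :
    reactionLaplacian c t h kp km * Matrix.diagonal ρ =
      incidenceMatrix c t h * Matrix.diagonal (fun e => kp e * ρ (t e)) *
        (incidenceMatrix c t h)ᵀ :=
  balanced_laplacian_factorization_general c E t h hth kp km ρ hdb
end

section
/- Let c, m be positive integers, Z a real m×c matrix, and L a real c×c matrix with zero column sums (∀ j, ∑ i, L i j = 0) and nonpositive off-diagonal entries (L i j ≤ 0 for i ≠ j). Suppose x* : Fin m → ℝ is positive and satisfies L *ᵥ (fun i => Real.exp ((Zᵀ *ᵥ (fun k => Real.log (x* k))) i)) = 0 (a complex-balanced equilibrium). Then for every positive x : Fin m → ℝ, (fun k => Real.log (x k) − Real.log (x* k)) ⬝ᵥ (Z *ᵥ (L *ᵥ (fun i => Real.exp ((Zᵀ *ᵥ (fun k => Real.log (x k))) i)))) ≥ 0. (The Gibbs free energy G is nonincreasing along the dynamics ẋ = −Z L Exp(Zᵀ Ln x).) -/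
/-!
With `y = Zᵀ ln x`, `y* = Zᵀ ln x*` and `u = y - y*`, the quantity is `u ⬝ B exp u` for
`B = L diag(exp y*)`. This `B` has zero column sums (as `L` does), zero row sums (this is complex
balance) and nonpositive off-diagonal entries. The zero sums let one rewrite `u ⬝ B exp u` as
`∑ B_ij (exp u_j + exp u_j (u_i - u_j) - exp u_i)`, and off the diagonal both factors are
nonpositive, the second by convexity of `exp`.
-/

open Matrix Real Finset

theorem exp_add_mul_sub_le_exp (a b : ℝ) : exp b + exp b * (a - b) ≤ exp a :=
  calc exp b + exp b * (a - b) = exp b * (a - b + 1) := by ring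
    _ ≤ exp b * exp (a - b) := by gcongr; exact add_one_le_exp _
    _ = exp a := by rw [← exp_add]; ring_nf

section ZeroSums

variable {ι : Type*} [Fintype ι] (B : Matrix ι ι ℝ)

theorem sum_sum_mul_right_eq_zero (hcol : ∀ j, ∑ i, B i j = 0) (f : ι → ℝ) :
    ∑ i, ∑ j, B i j * f j = 0 := by
  rw [sum_comm]
  exact sum_eq_zero fun j _ => by rw [← sum_mul, hcol, zero_mul]

theorem sum_sum_mul_left_eq_zero (hrow : ∀ i, ∑ j, B i j = 0) (f : ι → ℝ) :
    ∑ i, ∑ j, B i j * f i = 0 :=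
  sum_eq_zero fun i _ => by rw [← sum_mul, hrow, zero_mul]

theorem dotProduct_mulVec_exp_nonneg (hrow : ∀ i, ∑ j, B i j = 0)
    (hcol : ∀ j, ∑ i, B i j = 0) (hoff : ∀ i j, i ≠ j → B i j ≤ 0) (u : ι → ℝ) :
    0 ≤ u ⬝ᵥ (B *ᵥ fun j => exp (u j)) := by
  have hterm : ∀ i j, 0 ≤ B i j * (exp (u j) + exp (u j) * (u i - u j) - exp (u i)) := by
    intro i j
    rcases eq_or_ne i j with rfl | hij
    · simp
    · exact mul_nonneg_of_nonpos_of_nonpos (hoff i j hij)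
        (by linarith [exp_add_mul_sub_le_exp (u i) (u j)])
  have hsplit : ∀ i j, B i j * (exp (u j) + exp (u j) * (u i - u j) - exp (u i)) =
      u i * (B i j * exp (u j)) + (B i j * exp (u j) - B i j * (u j * exp (u j)) -
        B i j * exp (u i)) := fun i j => by ring
  calc 0 ≤ ∑ i, ∑ j, B i j * (exp (u j) + exp (u j) * (u i - u j) - exp (u i)) :=
        sum_nonneg fun i _ => sum_nonneg fun j _ => hterm i j
    _ = u ⬝ᵥ (B *ᵥ fun j => exp (u j)) := by
      simp only [hsplit, sum_add_distrib, sum_sub_distrib,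
        sum_sum_mul_right_eq_zero B hcol, sum_sum_mul_left_eq_zero B hrow, dotProduct,
        mulVec, mul_sum]
      ring

theorem dotProduct_mulVec_exp_sub_nonneg (hcol : ∀ j, ∑ i, B i j = 0)
    (hoff : ∀ i j, i ≠ j → B i j ≤ 0) {y ys : ι → ℝ}
    (hbal : B *ᵥ (fun i => exp (ys i)) = 0) :
    0 ≤ (y - ys) ⬝ᵥ (B *ᵥ fun i => exp (y i)) := by
  set D : Matrix ι ι ℝ := of fun i j => B i j * exp (ys j)
  have hmulVec : (B *ᵥ fun i => exp (y i)) = D *ᵥ fun i => exp ((y - ys) i) := by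
    funext i
    refine sum_congr rfl fun j _ => ?_
    simp only [D, of_apply, Pi.sub_apply, exp_sub, mul_assoc, mul_div_cancel₀ _ (exp_ne_zero _)]
  rw [hmulVec]
  refine dotProduct_mulVec_exp_nonneg D (fun i => ?_) (fun j => ?_) (fun i j hij => ?_) _
  · simpa only [D, of_apply, mulVec, dotProduct, Pi.zero_apply] using congrFun hbal i
  · simp only [D, of_apply, ← sum_mul, hcol, zero_mul]
  · exact mul_nonpos_of_nonpos_of_nonneg (hoff i j hij) (exp_nonneg _)

end ZeroSums

theorem gibbs_free_energy_nonincreasing_general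
    (c m : ℕ)
    (Z : Matrix (Fin m) (Fin c) ℝ)
    (L : Matrix (Fin c) (Fin c) ℝ)
    (hcol : ∀ j, ∑ i, L i j = 0)
    (hoff : ∀ i j, i ≠ j → L i j ≤ 0)
    (xs : Fin m → ℝ)
    (hbal : L *ᵥ (fun i => Real.exp ((Zᵀ *ᵥ (fun k => Real.log (xs k))) i)) = 0) :
    ∀ x : Fin m → ℝ, (∀ k, 0 < x k) →
      (fun k => Real.log (x k) - Real.log (xs k)) ⬝ᵥ
        (Z *ᵥ (L *ᵥ (fun i => Real.exp ((Zᵀ *ᵥ (fun k => Real.log (x k))) i)))) ≥ 0 := by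
  intro x _
  have hlog : (fun k => log (x k) - log (xs k)) = (fun k => log (x k)) - fun k => log (xs k) :=
    rfl
  rw [ge_iff_le, dotProduct_mulVec, ← mulVec_transpose, hlog, mulVec_sub]
  exact dotProduct_mulVec_exp_sub_nonneg L hcol hoff hbal

theorem gibbs_free_energy_nonincreasing
    (c m : ℕ) (hc : 0 < c) (hm : 0 < m)
    (Z : Matrix (Fin m) (Fin c) ℝ)
    (L : Matrix (Fin c) (Fin c) ℝ)
    (hcol : ∀ j, ∑ i, L i j = 0)
    (hoff : ∀ i j, i ≠ j → L i j ≤ 0)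
    (xs : Fin m → ℝ) (hxs : ∀ k, 0 < xs k)
    (hbal : L *ᵥ (fun i => Real.exp ((Zᵀ *ᵥ (fun k => Real.log (xs k))) i)) = 0) :
    ∀ x : Fin m → ℝ, (∀ k, 0 < x k) →
      (fun k => Real.log (x k) - Real.log (xs k)) ⬝ᵥ
        (Z *ᵥ (L *ᵥ (fun i => Real.exp ((Zᵀ *ᵥ (fun k => Real.log (x k))) i)))) ≥ 0 :=
  gibbs_free_energy_nonincreasing_general c m Z L hcol hoff xs hbal
end

section
/- Consider a reversible reaction graph on c vertices (finite edge set E, maps t, h : E → Fin c with t e ≠ h e, positive constants k⁺, k⁻ : E → ℝ, and Laplacian L as below), together with a real m×c matrix Z. Suppose x* : Fin m → ℝ is positive and detailed-balanced: for every edge e, k⁺ e * Real.exp ((Zᵀ *ᵥ log∘x*) (t e)) = k⁻ e * Real.exp ((Zᵀ *ᵥ log∘x*) (h e)). Then every positive equilibrium is detailed-balanced: if x : Fin m → ℝ is positive and Z *ᵥ (L *ᵥ (fun i => Real.exp ((Zᵀ *ᵥ log∘x) i))) = 0, then for every edge e, k⁺ e * Real.exp ((Zᵀ *ᵥ log∘x)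 (t e)) = k⁻ e * Real.exp ((Zᵀ *ᵥ log∘x) (h e)). -/
/-!
Write `μ = Zᵀ Ln x`, `μ* = Zᵀ Ln x*` and `δ = μ - μ*`. Pairing the equilibrium equation with
`Ln x - Ln x*` gives `0 = δ ⬝ L Exp μ = ∑ₑ (δ (t e) - δ (h e)) (k⁺ₑ e^{μ (t e)} - k⁻ₑ e^{μ (h e)})`.
Detailed balance at `x*` turns the flux of edge `e` into `wₑ (e^{δ (t e)} - e^{δ (h e)})` with
`wₑ = k⁺ₑ e^{μ* (t e)} > 0`, so by monotonicity of `exp` every summand is nonnegative, hence zero.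
Thus `δ (t e) = δ (h e)` on every edge, and then every flux vanishes.
-/

open Matrix

open Real

lemma reactionLaplacian_eq_sum_vecMulVec (c : ℕ) {E : Type*} [Fintype E]
    (t h : E → Fin c) (hth : ∀ e, t e ≠ h e) (kp km : E → ℝ) :
    reactionLaplacian c t h kp km = ∑ e, vecMulVec (Pi.single (t e) 1 - Pi.single (h e) 1)
      (kp e • Pi.single (t e) 1 - km e • Pi.single (h e) 1) := by
  ext i j
  simp only [reactionLaplacian, Matrix.sum_apply, vecMulVec_apply, Finset.sum_filter, Pi.sub_apply,
    Pi.smul_apply, Pi.single_apply, smul_eq_mul]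
  split_ifs <;> simp only [← Finset.sum_add_distrib, ← Finset.sum_neg_distrib] <;>
    refine Finset.sum_congr rfl fun e _ => ?_ <;> have := hth e <;> split_ifs <;> grind

lemma dotProduct_reactionLaplacian_mulVec (c : ℕ) {E : Type*} [Fintype E]
    (t h : E → Fin c) (hth : ∀ e, t e ≠ h e) (kp km : E → ℝ) (v y : Fin c → ℝ) :
    v ⬝ᵥ (reactionLaplacian c t h kp km *ᵥ y) =
      ∑ e, (v (t e) - v (h e)) * (kp e * y (t e) - km e * y (h e)) := by
  simp [reactionLaplacian_eq_sum_vecMulVec c t h hth, sum_mulVec, vecMulVec_mulVec, dotProduct_sum,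
    dotProduct_sub, sub_dotProduct, smul_dotProduct]

lemma StrictMono.sub_mul_sub_pos {α : Type*} [Ring α] [LinearOrder α] [IsStrictOrderedRing α]
    {f : α → α} (hf : StrictMono f) {a b : α} (hab : a ≠ b) : 0 < (a - b) * (f a - f b) := by
  rcases hab.lt_or_gt with hlt | hlt
  · exact mul_pos_of_neg_of_neg (sub_neg.2 hlt) (sub_neg.2 (hf hlt))
  · exact mul_pos (sub_pos.2 hlt) (sub_pos.2 (hf hlt))

lemma mul_exp_sub_mul_exp_of_mul_exp_eq {p q a b a' b' : ℝ} (hbal : p * exp a' = q * exp b') :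
    p * exp a - q * exp b = p * exp a' * (exp (a - a') - exp (b - b')) := by
  have hsplit (u u' : ℝ) : exp u = exp u' * exp (u - u') := by rw [← exp_add, add_sub_cancel]
  rw [hsplit a a', hsplit b b', ← mul_assoc, ← mul_assoc, ← hbal, mul_sub]

def IsDetailedBalanced {V E : Type*} (t h : E → V) (kp km : E → ℝ) (μ : V → ℝ) : Prop :=
  ∀ e, kp e * exp (μ (t e)) = km e * exp (μ (h e))

theorem IsDetailedBalanced.of_dotProduct_reactionLaplacian_mulVec_eq_zero {c : ℕ} {E : Type*}
    [Fintype E] {t h : E → Fin c} (hth : ∀ e, t e ≠ h e) {kp km : E → ℝ} (hkp : ∀ e, 0 < kp e)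
    {μs μ : Fin c → ℝ} (hbal : IsDetailedBalanced t h kp km μs)
    (horth : (μ - μs) ⬝ᵥ (reactionLaplacian c t h kp km *ᵥ fun i => exp (μ i)) = 0) :
    IsDetailedBalanced t h kp km μ := by
  set δ := μ - μs
  have hflux (e : E) : kp e * exp (μ (t e)) - km e * exp (μ (h e)) =
      kp e * exp (μs (t e)) * (exp (δ (t e)) - exp (δ (h e))) :=
    mul_exp_sub_mul_exp_of_mul_exp_eq (hbal e)
  have hweight (e : E) : 0 < kp e * exp (μs (t e)) := mul_pos (hkp e) (exp_pos _)
  have hterm (e : E) (hne : δ (t e) ≠ δ (h e)) :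
      0 < (δ (t e) - δ (h e)) * (kp e * exp (μ (t e)) - km e * exp (μ (h e))) := by
    rw [hflux, mul_left_comm]
    exact mul_pos (hweight e) (exp_strictMono.sub_mul_sub_pos hne)
  have hterm_nonneg (e : E) :
      0 ≤ (δ (t e) - δ (h e)) * (kp e * exp (μ (t e)) - km e * exp (μ (h e))) := by
    by_cases hne : δ (t e) = δ (h e)
    · rw [hne, sub_self, zero_mul]
    · exact (hterm e hne).le
  rw [dotProduct_reactionLaplacian_mulVec c t h hth] at horth
  have hterm_zero := (Finset.sum_eq_zero_iff_of_nonneg fun e _ => hterm_nonneg e).1 horth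
  intro e
  have hδ : δ (t e) = δ (h e) := by
    by_contra hne
    exact (hterm e hne).ne' (hterm_zero e (Finset.mem_univ e))
  rw [← sub_eq_zero, hflux, hδ, sub_self, mul_zero]

theorem all_equilibria_detailed_balanced_general
    (c m : ℕ) (E : Type*) [Fintype E]
    (t h : E → Fin c) (hth : ∀ e, t e ≠ h e)
    (kp km : E → ℝ) (hkp : ∀ e, 0 < kp e)
    (Z : Matrix (Fin m) (Fin c) ℝ)
    (xs : Fin m → ℝ)
    (hdb : ∀ e, kp e * Real.exp ((Zᵀ *ᵥ (fun k => Real.log (xs k))) (t e)) =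
      km e * Real.exp ((Zᵀ *ᵥ (fun k => Real.log (xs k))) (h e))) :
    ∀ x : Fin m → ℝ, (∀ k, 0 < x k) →
      Z *ᵥ (reactionLaplacian c t h kp km *ᵥ
        (fun i => Real.exp ((Zᵀ *ᵥ (fun k => Real.log (x k))) i))) = 0 →
      ∀ e, kp e * Real.exp ((Zᵀ *ᵥ (fun k => Real.log (x k))) (t e)) =
        km e * Real.exp ((Zᵀ *ᵥ (fun k => Real.log (x k))) (h e)) := by
  intro x _ heq
  refine IsDetailedBalanced.of_dotProduct_reactionLaplacian_mulVec_eq_zero hth hkp hdb ?_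
  calc (Zᵀ *ᵥ (fun k => log (x k)) - Zᵀ *ᵥ (fun k => log (xs k))) ⬝ᵥ
        (reactionLaplacian c t h kp km *ᵥ fun i => exp ((Zᵀ *ᵥ fun k => log (x k)) i))
      = ((fun k => log (x k)) - fun k => log (xs k)) ⬝ᵥ (Z *ᵥ
          (reactionLaplacian c t h kp km *ᵥ fun i => exp ((Zᵀ *ᵥ fun k => log (x k)) i))) := by
        rw [← mulVec_sub, mulVec_transpose]
        exact (dotProduct_mulVec _ _ _).symm
    _ = 0 := by rw [heq, dotProduct_zero]

theorem all_equilibria_detailed_balanced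
    (c m : ℕ) (hc : 0 < c) (hm : 0 < m) (E : Type*) [Fintype E]
    (t h : E → Fin c) (hth : ∀ e, t e ≠ h e)
    (kp km : E → ℝ) (hkp : ∀ e, 0 < kp e) (hkm : ∀ e, 0 < km e)
    (Z : Matrix (Fin m) (Fin c) ℝ)
    (xs : Fin m → ℝ) (hxs : ∀ k, 0 < xs k)
    (hdb : ∀ e, kp e * Real.exp ((Zᵀ *ᵥ (fun k => Real.log (xs k))) (t e)) =
      km e * Real.exp ((Zᵀ *ᵥ (fun k => Real.log (xs k))) (h e))) :
    ∀ x : Fin m → ℝ, (∀ k, 0 < x k) →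
      Z *ᵥ (reactionLaplacian c t h kp km *ᵥ
        (fun i => Real.exp ((Zᵀ *ᵥ (fun k => Real.log (x k))) i))) = 0 →
      ∀ e, kp e * Real.exp ((Zᵀ *ᵥ (fun k => Real.log (x k))) (t e)) =
        km e * Real.exp ((Zᵀ *ᵥ (fun k => Real.log (x k))) (h e)) :=
  all_equilibria_detailed_balanced_general c m E t h hth kp km hkp Z xs hdb
end
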